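/- For every left preferred Gauss code w on n letters, the n-th iterate of shift^LP satisfies (shift^LP)^n(w) = w; that is, shift^LP is a bijection of the set of left preferred Gauss codes on n letters whose n-th power is the identity. -/

import Mathlib

/-- A Gauss code on `n` letters: a bijection from the `2*n` positions to
letters paired with a side (`false` = L, `true` = R). -/
abbrev GaussCode (n : ℕ) := Fin (2 * n) ≃ Fin n × Bool

instance (n : ℕ) [NeZero n] : NeZero (2 * n) := ⟨by have := NeZero.ne n; omega⟩

namespace GaussCode

variable {n : ℕ}

/-- `π_*(w)`: relabel the letters by the permutation `π`. -/
def permAct (π : Equiv.Perm (Fin n)) (w : GaussCode n) : GaussCode n :=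
  w.trans (π.prodCongr (Equiv.refl Bool))

open Fin.NatCast in
/-- `shift[m](w)`: the code whose entry at position `i` is the entry of `w` at
position `i + m` (mod `2n`). -/
def shift [NeZero n] (m : ℕ) (w : GaussCode n) : GaussCode n :=
  (Equiv.addRight ((m : Fin (2 * n)))).trans w

/-- `rev(w)`: the code whose entry at position `i` is the entry of `w` at
position `2n - 1 - i`. -/
def rev (w : GaussCode n) : GaussCode n :=
  (Fin.revPerm).trans w

/-- A Gauss code is left preferred if its `L`-entries appear in the order
`(1,L), (2,L), …, (n,L)` and its entry at position `0` is `(1,L)`. -/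
def IsLeftPreferred [NeZero n] (w : GaussCode n) : Prop :=
  StrictMono (fun j : Fin n => w.symm (j, false)) ∧ w 0 = (0, false)

/-- `proj^LP(w)`: relabel letters in the order of appearance of their `L`-entries,
then rotate so that `(1,L)` is at position `0`. -/
def projLP [NeZero n] (w : GaussCode n) : GaussCode n :=
  let π : Equiv.Perm (Fin n) := (Tuple.sort (fun j : Fin n => w.symm (j, false)))⁻¹
  let w' := permAct π w
  shift ((w'.symm ((0 : Fin n), false)).val) w'

/-- `shift^LP(w) := proj^LP(shift[1](w))`. -/
def shiftLP [NeZero n] (w : GaussCode n) : GaussCode n :=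
  projLP (shift 1 w)

/-- `rev^LP(w) := proj^LP(rev(w))`. -/
def revLP [NeZero n] (w : GaussCode n) : GaussCode n :=
  projLP (rev w)

/-- The value of an entry in the order `(1,L) < (1,R) < (2,L) < (2,R) < …`. -/
def entryKey (e : Fin n × Bool) : ℕ :=
  2 * e.1.val + (if e.2 then 1 else 0)

/-- Lexicographic (strict) order on Gauss codes, comparing entries position by
position in the order `(1,L) < (1,R) < (2,L) < (2,R) < …`. -/
def lexLt (w w' : GaussCode n) : Prop :=
  ∃ i : Fin (2 * n), (∀ k, k < i → w k = w' k) ∧ entryKey (w i) < entryKey (w' i)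

/-- Lexicographic order on Gauss codes. -/
def lexLe (w w' : GaussCode n) : Prop :=
  w = w' ∨ lexLt w w'

/-- A left preferred Gauss code is left canonical if it is the smallest element
of its `shift^LP`-orbit `{w, shift^LP(w), …, (shift^LP)^{n-1}(w)}`. -/
def IsLeftCanonical [NeZero n] (w : GaussCode n) : Prop :=
  IsLeftPreferred w ∧ ∀ k < n, lexLe w (shiftLP^[k] w)

/-- `proj^LC(w)`: the smallest element of the `shift^LP`-orbit of `proj^LP(w)`. -/
noncomputable def projLC [NeZero n] (w : GaussCode n) : GaussCode n :=
  letI := Classical.propDecidable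
  if h : ∃ v : GaussCode n, (∃ k < n, v = shiftLP^[k] (projLP w)) ∧
      ∀ k < n, lexLe v (shiftLP^[k] (projLP w))
  then h.choose else projLP w

/-- `rev^LC(w) := proj^LC(rev(w))`. -/
noncomputable def revLC [NeZero n] (w : GaussCode n) : GaussCode n :=
  projLC (rev w)

/-- Oriented equivalence of Gauss codes: `w' = shift[m](π_*(w))` for some
permutation `π` and integer `m`. -/
def OrientedEquiv [NeZero n] (w w' : GaussCode n) : Prop :=
  ∃ (π : Equiv.Perm (Fin n)) (m : ℕ), w' = shift m (permAct π w)

/-- Unoriented equivalence: `w` is orientedly equivalent to `w'` or to `rev(w')`. -/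
def UnorientedEquiv [NeZero n] (w w' : GaussCode n) : Prop :=
  OrientedEquiv w w' ∨ OrientedEquiv w (rev w')

/-- A Gauss code is 1-reducible if two cyclically adjacent entries share the same letter. -/
def OneReducible [NeZero n] (w : GaussCode n) : Prop :=
  ∃ i : Fin (2 * n), (w i).1 = (w (i + 1)).1

/-- A Gauss code is 2-reducible (cyclically, with `L = false`, `R = true`). -/
def TwoReducible [NeZero n] (w : GaussCode n) : Prop :=
  ∃ (i i' : Fin (2 * n)) (j k : Fin n), j ≠ k ∧
    ((w i = (j, false) ∧ w (i + 1) = (k, true) ∧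
        w i' = (j, true) ∧ w (i' + 1) = (k, false)) ∨
     (w i = (j, false) ∧ w (i + 1) = (k, true) ∧
        w i' = (k, false) ∧ w (i' + 1) = (j, true)) ∨
     (w i = (j, true) ∧ w (i + 1) = (k, false) ∧
        w i' = (k, true) ∧ w (i' + 1) = (j, false)))

/-- A Gauss code is minimal if it is neither 1-reducible nor 2-reducible. -/
def IsMinimal [NeZero n] (w : GaussCode n) : Prop :=
  ¬ OneReducible w ∧ ¬ TwoReducible w

/-- `σ_w`: the involution of positions sending each position to the unique other
position carrying the same letter. -/
def sigmaMap (w : GaussCode n) : Fin (2 * n) → Fin (2 * n) :=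
  fun i => w.symm ((w i).1, !(w i).2)

/-- `h_w`: the side (`false` = L, `true` = R) of the entry at each position. -/
def hMap (w : GaussCode n) : Fin (2 * n) → Bool :=
  fun i => (w i).2

end GaussCode

/-!
`proj^LP` always yields a left preferred code: after sorting, the positions of the `L`-entries
increase, and subtracting the smallest of them keeps them increasing.

Write `startAt k w` for `w` read cyclically from its entry `(k, L)`, with every letter `j`
renamed `j - k`; these operations compose additively in `k`. If `w` is left preferred, its
`L`-entries occur in the order `0, 1, …, n - 1` from position `0`; after `shift[1]` they occur in
the cyclic order `1, …, n - 1, 0`, so `proj^LP` renames `j` to `j - 1` and rotates to `(1, L)`: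
`shift^LP w = startAt 1 w`. Hence `(shift^LP)^[k] w = startAt k w`, and
`startAt n w = startAt 0 w = w`.
-/

theorem Tuple.sort_eq_of_strictMono {n : ℕ} {α : Type*} [LinearOrder α] {f : Fin n → α}
    {σ : Equiv.Perm (Fin n)} (h : StrictMono (f ∘ σ)) : Tuple.sort f = σ :=
  (Tuple.eq_sort_iff.2 ⟨h.monotone, fun _ _ hij hf => absurd hf (h.injective.ne hij.ne)⟩).symm

theorem Fin.strictMono_sub_apply_zero {n m : ℕ} [NeZero n] {f : Fin n → Fin m}
    (hf : StrictMono f) : StrictMono fun j => f j - f 0 := by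
  intro i j hij
  have hi : f 0 ≤ f i := hf.monotone (Fin.zero_le i)
  have hj : f i < f j := hf hij
  show f i - f 0 < f j - f 0
  fin_omega

theorem Fin.strictMono_add_one_sub_one {n m : ℕ} [NeZero n] [NeZero m] {f : Fin n → Fin m}
    (hf : StrictMono f) (h0 : f 0 = 0) : StrictMono fun j => f (j + 1) - 1 := by
  obtain ⟨n, rfl⟩ := Nat.exists_eq_succ_of_ne_zero (NeZero.ne n)
  obtain ⟨m, rfl⟩ := Nat.exists_eq_succ_of_ne_zero (NeZero.ne m)
  intro i j hij
  have hi : i < Fin.last n := hij.trans_le (Fin.le_last j)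
  have hfi : f (i + 1) ≠ 0 := h0 ▸ hf.injective.ne fun h => by
    simpa [Fin.val_add_one_of_lt hi] using congrArg Fin.val h
  have hfi_pos : 0 < (f (i + 1)).val := Fin.pos_iff_ne_zero.2 hfi
  have hfi_lt := (f (i + 1)).isLt
  show f (i + 1) - 1 < f (j + 1) - 1
  rw [Fin.lt_def, Fin.coe_sub_one, Fin.coe_sub_one, if_neg hfi]
  rcases (Fin.le_last j).lt_or_eq with hj | rfl
  · have hlt : f (i + 1) < f (j + 1) :=
      hf (by rw [Fin.lt_def, Fin.val_add_one_of_lt hi, Fin.val_add_one_of_lt hj]; omega)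
    rw [if_neg (Fin.pos_iff_ne_zero.1 ((Fin.zero_le _).trans_lt hlt))]
    rw [Fin.lt_def] at hlt
    omega
  · rw [Fin.last_add_one, h0, if_pos rfl]
    omega

namespace GaussCode

variable {n : ℕ}

@[simp] lemma permAct_apply (π : Equiv.Perm (Fin n)) (w : GaussCode n) (i : Fin (2 * n)) :
    permAct π w i = (π (w i).1, (w i).2) := rfl

@[simp] lemma permAct_symm_apply (π : Equiv.Perm (Fin n)) (w : GaussCode n) (j : Fin n)
    (s : Bool) : (permAct π w).symm (j, s) = w.symm (π⁻¹ j, s) := rfl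

@[simp] lemma permAct_one (w : GaussCode n) : permAct 1 w = w := by
  ext i : 1
  simp

lemma permAct_permAct (π ρ : Equiv.Perm (Fin n)) (w : GaussCode n) :
    permAct π (permAct ρ w) = permAct (π * ρ) w := rfl

variable [NeZero n]

def rotate (c : Fin (2 * n)) (w : GaussCode n) : GaussCode n :=
  (Equiv.addRight c).trans w

@[simp] lemma rotate_apply (c : Fin (2 * n)) (w : GaussCode n) (i : Fin (2 * n)) :
    rotate c w i = w (i + c) := rfl

@[simp] lemma rotate_symm_apply (c : Fin (2 * n)) (w : GaussCode n) (e : Fin n × Bool) :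
    (rotate c w).symm e = w.symm e - c := by
  simp [rotate, sub_eq_add_neg]

lemma rotate_rotate (a b : Fin (2 * n)) (w : GaussCode n) :
    rotate a (rotate b w) = rotate (b + a) w := by
  ext i : 1
  simp [add_assoc, add_comm a b]

lemma permAct_rotate (π : Equiv.Perm (Fin n)) (c : Fin (2 * n)) (w : GaussCode n) :
    permAct π (rotate c w) = rotate c (permAct π w) := rfl

lemma shift_eq_rotate (m : ℕ) (w : GaussCode n) : shift m w = rotate (Fin.ofNat (2 * n) m) w :=
  rfl

def startAt (k : Fin n) (w : GaussCode n) : GaussCode n :=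
  rotate (w.symm (k, false)) (permAct (Equiv.addRight k)⁻¹ w)

lemma startAt_rotate (k : Fin n) (c : Fin (2 * n)) (w : GaussCode n) :
    startAt k (rotate c w) = startAt k w := by
  simp only [startAt, rotate_symm_apply, permAct_rotate, rotate_rotate, add_sub_cancel]

lemma startAt_permAct_addRight (a b : Fin n) (w : GaussCode n) :
    startAt a (permAct (Equiv.addRight b)⁻¹ w) = startAt (a + b) w := by
  have hπ : (Equiv.addRight a)⁻¹ * (Equiv.addRight b)⁻¹ = (Equiv.addRight (a + b))⁻¹ := by
    ext x; simp [add_comm]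
  simp only [startAt, permAct_symm_apply, inv_inv, Equiv.coe_addRight, permAct_permAct, hπ]

lemma startAt_startAt (a b : Fin n) (w : GaussCode n) :
    startAt a (startAt b w) = startAt (a + b) w :=
  (startAt_rotate a _ _).trans (startAt_permAct_addRight a b w)

lemma startAt_zero {w : GaussCode n} (hw : w 0 = (0, false)) : startAt 0 w = w := by
  ext i : 1
  simp [startAt, ← hw]

lemma isLeftPreferred_startAt_zero {u : GaussCode n}
    (hu : StrictMono fun j : Fin n => u.symm (j, false)) : IsLeftPreferred (startAt 0 u) := by
  refine ⟨?_, ?_⟩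
  · simpa [startAt] using Fin.strictMono_sub_apply_zero hu
  · simp [startAt]

lemma projLP_eq_startAt_zero (v : GaussCode n) :
    projLP v = startAt 0 (permAct (Tuple.sort fun j => v.symm (j, false))⁻¹ v) := by
  simp [projLP, startAt, shift_eq_rotate, Equiv.addRight_zero]

theorem isLeftPreferred_projLP (v : GaussCode n) : IsLeftPreferred (projLP v) := by
  set f := fun j : Fin n => v.symm (j, false)
  have hf : Function.Injective f := fun i j h => by simpa [f] using h
  rw [projLP_eq_startAt_zero]
  apply isLeftPreferred_startAt_zero
  exact (Tuple.monotone_sort f).strictMono_of_injective (hf.comp (Tuple.sort f).injective)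

theorem shiftLP_eq_startAt_one {w : GaussCode n} (hw : IsLeftPreferred w) :
    shiftLP w = startAt 1 w := by
  have hsort : Tuple.sort (fun j => (shift 1 w).symm (j, false)) = Equiv.addRight 1 := by
    apply Tuple.sort_eq_of_strictMono
    simp only [Function.comp_def, shift_eq_rotate, rotate_symm_apply, Equiv.coe_addRight,
      Fin.ofNat_eq_cast]
    exact Fin.strictMono_add_one_sub_one hw.1 (w.symm_apply_eq.2 hw.2.symm)
  rw [shiftLP, projLP_eq_startAt_zero, hsort, shift_eq_rotate, permAct_rotate, startAt_rotate,
    startAt_permAct_addRight, zero_add]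

lemma isLeftPreferred_iterate_shiftLP {w : GaussCode n} (hw : IsLeftPreferred w) :
    ∀ k, IsLeftPreferred (shiftLP^[k] w)
  | 0 => hw
  | k + 1 => by
    rw [Function.iterate_succ_apply']
    exact isLeftPreferred_projLP _

open Fin.NatCast in
lemma iterate_shiftLP {w : GaussCode n} (hw : IsLeftPreferred w) (k : ℕ) :
    shiftLP^[k] w = startAt k w := by
  induction k with
  | zero => rw [Function.iterate_zero_apply, Nat.cast_zero, startAt_zero hw.2]
  | succ k ih =>
    rw [Function.iterate_succ_apply', shiftLP_eq_startAt_one (isLeftPreferred_iterate_shiftLP hw k),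
      ih, startAt_startAt, Nat.cast_succ, add_comm]

end GaussCode

open GaussCode in
/-- `shift^LP` maps left preferred Gauss codes to left preferred Gauss
codes and its `n`-th iterate is the identity on them. -/
theorem stmt3 (n : ℕ) [NeZero n] (w : GaussCode n) (hw : IsLeftPreferred w) :
    IsLeftPreferred (shiftLP w) ∧ shiftLP^[n] w = w :=
  ⟨isLeftPreferred_projLP _, by rw [iterate_shiftLP hw, Fin.natCast_self, startAt_zero hw.2]⟩
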